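/- Logarithmic bound on the gradient of a single-layer potential with bounded density. There exists a constant C ∈ (0, ∞), depending only on d, such that for every measurable u : ℝ^(d−1) → ℝ with |u| ≤ 1 almost everywhere and u = 0 outside the closed ball of radius 2 centered at the origin in ℝ^(d−1), every x′ ∈ ℝ^(d−1), and every x_d ∈ (0, 1/2]: | ∫_{{y′ ∈ ℝ^(d−1) : |y′| ≤ 2}} ( (x′ − y′, x_d) / |(x′ − y′, x_d)|^d ) u(y′) dy′ | ≤ C·log(1/x_d), where (x′ − y′, x_d) ∈ ℝ^d and |·| is the Euclidean norm on ℝ^d. -/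

import Mathlib

open MeasureTheory Filter Topology
open scoped ENNReal NNReal

noncomputable section

/-- Model of the hyperplane `ℝ^(d-1)`. -/
abbrev Hyp (d : ℕ) : Type := EuclideanSpace ℝ (Fin (d - 1))

/-- Model of the ambient space `ℝ^d`, split as horizontal × vertical. -/
abbrev Amb (d : ℕ) : Type := Hyp d × ℝ

/-- Squared Euclidean norm on the ambient space. -/
def nsq {d : ℕ} (v : Amb d) : ℝ := ‖v.1‖ ^ 2 + v.2 ^ 2

/-- The open cube `(−L/2, L/2)^(d−1)` in the hyperplane. -/
def baseQ (d : ℕ) (L : ℝ) : Set (Hyp d) := {x' | ∀ i, x' i ∈ Set.Ioo (-(L / 2)) (L / 2)}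

/-- The open box `Q_L = (−L/2, L/2)^(d−1) × (0, L)`. -/
def boxQ (d : ℕ) (L : ℝ) : Set (Amb d) := (baseQ d L) ×ˢ Set.Ioo (0 : ℝ) L

/-- The (open) bottom face of `Q_L`. -/
def botQ (d : ℕ) (L : ℝ) : Set (Amb d) := (baseQ d L) ×ˢ ({0} : Set ℝ)

/-- `Γ_L`: the lateral and top part of the boundary of `Q_L`. -/
def gammaQ (d : ℕ) (L : ℝ) : Set (Amb d) := frontier (boxQ d L) \ closure (botQ d L)

/-- The `(d−1)`-dimensional Hausdorff measure on the ambient space. -/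
def hMeas (d : ℕ) : Measure (Amb d) := μH[(d : ℝ) - 1]

/-- Divergence of a vector field on the hyperplane. -/
def divg {d : ℕ} (φ : Hyp d → Hyp d) (x : Hyp d) : ℝ :=
  ∑ i, fderiv ℝ φ x (EuclideanSpace.single i 1) i

/-- The set of test integrals defining the total variation of `u` on the open set `U`. -/
def tvSet (d : ℕ) (u : Hyp d → ℝ) (U : Set (Hyp d)) : Set ℝ :=
  {r | ∃ φ : Hyp d → Hyp d, ContDiff ℝ (⊤ : ℕ∞) φ ∧ HasCompactSupport φ ∧
        tsupport φ ⊆ U ∧ (∀ x, ‖φ x‖ ≤ 1) ∧ r = ∫ x in U, u x * divg φ x}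

/-- Total variation of `u` on the open set `U`. -/
def tv (d : ℕ) (u : Hyp d → ℝ) (U : Set (Hyp d)) : ℝ := sSup (tvSet d u U)

/-- The set of test integrals defining the periodic total variation over one cell. -/
def tvPerSet (d : ℕ) (L : ℝ) (u : Hyp d → ℝ) : Set ℝ :=
  {r | ∃ φ : Hyp d → Hyp d, ContDiff ℝ (⊤ : ℕ∞) φ ∧
        (∀ x i, φ (x + L • EuclideanSpace.single i 1) = φ x) ∧
        (∀ x, ‖φ x‖ ≤ 1) ∧ r = ∫ x in baseQ d L, u x * divg φ x}

/-- Periodic total variation of `u` over one periodicity cell. -/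
def tvPer (d : ℕ) (L : ℝ) (u : Hyp d → ℝ) : ℝ := sSup (tvPerSet d L u)

/-- Field (electrostatic) energy of `b` on `Q_L`. -/
def fieldE (d : ℕ) (L : ℝ) (b : Amb d → Amb d) : ℝ := ∫ x in boxQ d L, (1/2) * nsq (b x)

/-- The admissible class `A(Q_L)` (free boundary conditions on `Γ_L`). -/
structure memA (d : ℕ) (L : ℝ) (u : Hyp d → ℝ) (b : Amb d → Amb d) : Prop where
  meas_u : Measurable u
  pm_u : ∀ x ∈ baseQ d L, u x = 1 ∨ u x = -1
  tv_fin : BddAbove (tvSet d u (baseQ d L))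
  l2_b : MemLp b 2 (volume.restrict (boxQ d L))
  constraint : ∀ ζ : Amb d → ℝ, ContDiff ℝ (⊤ : ℕ∞) ζ → HasCompactSupport ζ →
      Disjoint (tsupport ζ) (gammaQ d L) →
      ∫ x in boxQ d L, fderiv ℝ ζ x (b x) = -∫ x' in baseQ d L, ζ (x', 0) * u x'

/-- The admissible class `A^0(Q_L)` (zero flux on `Γ_L`). -/
structure memA0 (d : ℕ) (L : ℝ) (u : Hyp d → ℝ) (b : Amb d → Amb d) : Prop where
  meas_u : Measurable u
  pm_u : ∀ x ∈ baseQ d L, u x = 1 ∨ u x = -1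
  tv_fin : BddAbove (tvSet d u (baseQ d L))
  l2_b : MemLp b 2 (volume.restrict (boxQ d L))
  constraint : ∀ ζ : Amb d → ℝ, ContDiff ℝ (⊤ : ℕ∞) ζ →
      ∫ x in boxQ d L, fderiv ℝ ζ x (b x) = -∫ x' in baseQ d L, ζ (x', 0) * u x'

/-- The admissible class `A^per(Q_L)` (horizontally periodic candidates). -/
structure memAper (d : ℕ) (L : ℝ) (u : Hyp d → ℝ) (b : Amb d → Amb d) : Prop where
  meas_u : Measurable u
  pm_u : ∀ x, u x = 1 ∨ u x = -1
  per_u : ∀ x i, u (x + L • EuclideanSpace.single i 1) = u x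
  tv_fin : BddAbove (tvPerSet d L u)
  l2_b : MemLp b 2 (volume.restrict (boxQ d L))
  per_b : ∀ (x' : Hyp d) (t : ℝ) (i : Fin (d - 1)),
      b (x' + L • EuclideanSpace.single i 1, t) = b (x', t)
  constraint : ∀ ζ : Amb d → ℝ, ContDiff ℝ (⊤ : ℕ∞) ζ →
      (∀ (x' : Hyp d) (t : ℝ) (i : Fin (d - 1)),
        ζ (x' + L • EuclideanSpace.single i 1, t) = ζ (x', t)) →
      (∃ a, a < L ∧ ∀ (x' : Hyp d) (t : ℝ), a ≤ t → ζ (x', t) = 0) →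
      ∫ x in boxQ d L, fderiv ℝ ζ x (b x) = -∫ x' in baseQ d L, ζ (x', 0) * u x'

/-- Total energy `E(u, b, Q_L)`. -/
def totE (d : ℕ) (L : ℝ) (u : Hyp d → ℝ) (b : Amb d → Amb d) : ℝ :=
  tv d u (baseQ d L) + fieldE d L b

/-- Periodic total energy `E^per(u, b, Q_L)`. -/
def totEper (d : ℕ) (L : ℝ) (u : Hyp d → ℝ) (b : Amb d → Amb d) : ℝ :=
  tvPer d L u + fieldE d L b

/-- `σ(Q_L)`. -/
def sigFree (d : ℕ) (L : ℝ) : ℝ :=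
  sInf {r | ∃ u b, memA d L u b ∧ r = totE d L u b / L ^ (d - 1)}

/-- `σ^0(Q_L)`. -/
def sigZero (d : ℕ) (L : ℝ) : ℝ :=
  sInf {r | ∃ u b, memA0 d L u b ∧ r = totE d L u b / L ^ (d - 1)}

/-- `σ^per(Q_L)`. -/
def sigPer (d : ℕ) (L : ℝ) : ℝ :=
  sInf {r | ∃ u b, memAper d L u b ∧ r = totEper d L u b / L ^ (d - 1)}

/-- `(u, b)` is a minimizer of `E^per` over `A^per(Q_L)`. -/
def IsMinPer (d : ℕ) (L : ℝ) (u : Hyp d → ℝ) (b : Amb d → Amb d) : Prop :=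
  memAper d L u b ∧ ∀ u' b', memAper d L u' b' → totEper d L u b ≤ totEper d L u' b'

/-- Local energy `E(u, b, Q_l)`. -/
def Eloc (d : ℕ) (l : ℝ) (u : Hyp d → ℝ) (b : Amb d → Amb d) : ℝ :=
  tv d u (baseQ d l) + fieldE d l b

/-- The volume-averaged shifted energy `F(β, l)`. -/
def Floc (d : ℕ) (u : Hyp d → ℝ) (b : Amb d → Amb d) (β l : ℝ) : ℝ :=
  (tv d u (baseQ d l) + ∫ x in boxQ d l, (1/2) * nsq (b x - ((0 : Hyp d), β))) / l ^ d

/-- `ζ` vanishes on a neighborhood of the closed bottom face of `Q_l`. -/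
def vanishesNearBottom (d : ℕ) (l : ℝ) (ζ : Amb d → ℝ) : Prop :=
  ∃ U : Set (Amb d), IsOpen U ∧ closure (botQ d l) ⊆ U ∧ ∀ x ∈ U, ζ x = 0

/-- `btil` has the same distributional divergence in `Q_l` and the same flux across the
lateral and top faces as `b` (the flux across the bottom face is unconstrained). -/
def sameFlux (d : ℕ) (l : ℝ) (b btil : Amb d → Amb d) : Prop :=
  ∀ ζ : Amb d → ℝ, ContDiff ℝ (⊤ : ℕ∞) ζ → vanishesNearBottom d l ζ →
    ∫ x in boxQ d l, fderiv ℝ ζ x (btil x) = ∫ x in boxQ d l, fderiv ℝ ζ x (b x)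

/-- `b₀` is the over-relaxed field on `Q_l` associated with `b`. -/
def IsOverRelaxedOf (d : ℕ) (l : ℝ) (b b₀ : Amb d → Amb d) : Prop :=
  MemLp b₀ 2 (volume.restrict (boxQ d l)) ∧ sameFlux d l b b₀ ∧
    ∀ b', MemLp b' 2 (volume.restrict (boxQ d l)) → sameFlux d l b b' →
      fieldE d l b₀ ≤ fieldE d l b'

/-- Admissible fields for the over-relaxed problem with flux data `h` on `Γ_L`. -/
def fluxAdmissible (d : ℕ) (L : ℝ) (h : Amb d → ℝ) (b : Amb d → Amb d) : Prop :=
  MemLp b 2 (volume.restrict (boxQ d L)) ∧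
  ∀ ζ : Amb d → ℝ, ContDiff ℝ (⊤ : ℕ∞) ζ → vanishesNearBottom d L ζ →
    ∫ x in boxQ d L, fderiv ℝ ζ x (b x) = -∫ x in gammaQ d L, ζ x * h x ∂(hMeas d)

/-- `b₀` is the over-relaxed field on `Q_L` with flux data `h`. -/
def IsOverRelaxedFlux (d : ℕ) (L : ℝ) (h : Amb d → ℝ) (b₀ : Amb d → Amb d) : Prop :=
  fluxAdmissible d L h b₀ ∧ ∀ b', fluxAdmissible d L h b' → fieldE d L b₀ ≤ fieldE d L b'

/-- Admissible fields for the relaxed problem with flux data `g` on `Γ_L`. -/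
def memRel (d : ℕ) (L : ℝ) (g : Amb d → ℝ) (b : Amb d → Amb d) : Prop :=
  MemLp b 2 (volume.restrict (boxQ d L)) ∧
  ∃ u : Hyp d → ℝ, Measurable u ∧ (∀ x' ∈ baseQ d L, |u x'| ≤ 1) ∧
    ∀ ζ : Amb d → ℝ, ContDiff ℝ (⊤ : ℕ∞) ζ →
      ∫ x in boxQ d L, fderiv ℝ ζ x (b x)
        = -(∫ x' in baseQ d L, ζ (x', 0) * u x') - ∫ x in gammaQ d L, ζ x * g x ∂(hMeas d)

/-- The relaxed energy `E_rel^g(Q_L)`. -/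
def Erel (d : ℕ) (L : ℝ) (g : Amb d → ℝ) : ℝ :=
  sInf {r | ∃ b, memRel d L g b ∧ r = fieldE d L b}

/-- `b` is a minimizer of the relaxed problem `E_rel^g(Q_L)`. -/
def IsRelMin (d : ℕ) (L : ℝ) (g : Amb d → ℝ) (b : Amb d → Amb d) : Prop :=
  memRel d L g b ∧ ∀ b', memRel d L g b' → fieldE d L b ≤ fieldE d L b'

/-- The admissible class `A^g(Q_L)` (flux boundary data `g` on `Γ_L`). -/
structure memAg (d : ℕ) (L : ℝ) (g : Amb d → ℝ) (u : Hyp d → ℝ) (b : Amb d → Amb d) : Prop where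
  meas_u : Measurable u
  pm_u : ∀ x ∈ baseQ d L, u x = 1 ∨ u x = -1
  tv_fin : BddAbove (tvSet d u (baseQ d L))
  l2_b : MemLp b 2 (volume.restrict (boxQ d L))
  constraint : ∀ ζ : Amb d → ℝ, ContDiff ℝ (⊤ : ℕ∞) ζ →
      ∫ x in boxQ d L, fderiv ℝ ζ x (b x)
        = -(∫ x' in baseQ d L, ζ (x', 0) * u x') - ∫ x in gammaQ d L, ζ x * g x ∂(hMeas d)

/-- Squared Euclidean norm of the (within-)gradient of `v : ℝ^d → ℝ`, computed with
derivatives within the set `S`. -/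
def gradSqW (d : ℕ) (S : Set (Amb d)) (v : Amb d → ℝ) (x : Amb d) : ℝ :=
  (∑ i, (fderivWithin ℝ v S x (EuclideanSpace.single i 1, (0 : ℝ))) ^ 2)
    + (fderivWithin ℝ v S x ((0 : Hyp d), (1 : ℝ))) ^ 2

/-- The Laplacian of `v : ℝ^d → ℝ`, as a sum of pure second partial derivatives. -/
def lap (d : ℕ) (v : Amb d → ℝ) (x : Amb d) : ℝ :=
  (∑ i, fderiv ℝ (fun y => fderiv ℝ v y (EuclideanSpace.single i 1, (0 : ℝ))) x
      (EuclideanSpace.single i 1, (0 : ℝ)))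
    + fderiv ℝ (fun y => fderiv ℝ v y ((0 : Hyp d), (1 : ℝ))) x ((0 : Hyp d), (1 : ℝ))

/-- The open cube `(0, l)^(d-1)` in the hyperplane. -/
def posQ (d : ℕ) (l : ℝ) : Set (Hyp d) := {x' | ∀ i, x' i ∈ Set.Ioo (0 : ℝ) l}

/-- The closed cube `[0, L]^d` in the ambient space. -/
def ccubeQ (d : ℕ) (L : ℝ) : Set (Amb d) :=
  {x | (∀ i, x.1 i ∈ Set.Icc (0 : ℝ) L) ∧ x.2 ∈ Set.Icc (0 : ℝ) L}

/-- The open cube `(0, L)^d` in the ambient space. -/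
def ocubeQ (d : ℕ) (L : ℝ) : Set (Amb d) :=
  {x | (∀ i, x.1 i ∈ Set.Ioo (0 : ℝ) L) ∧ x.2 ∈ Set.Ioo (0 : ℝ) L}

/-! The kernel is bounded by `max (|x' - y'|, x_d) ^ (1 - d)`. Cut off at `|x' - y'| ≤ 2`, this
radial weight integrates in polar coordinates around `x'` to `|B₁| (1 + (d - 1) log (2 / x_d))`,
and beyond the cut-off it is at most `2 ^ (1 - d)` on a set of finite measure. Since
`log (1 / x_d) ≥ log 2`, the sum is `O(log (1 / x_d))`. -/

open Real Set Metric

def cutoffKernel (t R : ℝ) (n : ℕ) : ℝ → ℝ := (Iic R).indicator fun r => (max r t ^ n)⁻¹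

lemma continuous_inv_max_pow {t : ℝ} (ht : 0 < t) (n : ℕ) :
    Continuous fun r : ℝ => (max r t ^ n)⁻¹ :=
  ((continuous_id.max continuous_const).pow n).inv₀ fun _ =>
    (pow_pos (lt_max_of_lt_right ht) n).ne'

lemma inv_max_pow_le_cutoffKernel_add {R : ℝ} (hR : 0 < R) (t r : ℝ) (n : ℕ) :
    (max r t ^ n)⁻¹ ≤ cutoffKernel t R n r + (R ^ n)⁻¹ := by
  by_cases hr : r ≤ R
  · simp only [cutoffKernel, indicator_of_mem (mem_Iic.mpr hr)]
    have : 0 ≤ (R ^ n)⁻¹ := by positivity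
    linarith
  · simp only [cutoffKernel, indicator_of_notMem (notMem_Iic.mpr (not_le.mp hr)), zero_add]
    exact inv_anti₀ (pow_pos hR n)
      (pow_le_pow_left₀ hR.le ((not_le.mp hr).le.trans (le_max_left r t)) n)

lemma integral_Ioi_pow_mul_cutoffKernel {t R : ℝ} (ht : 0 < t) (htR : t ≤ R) (m : ℕ) :
    ∫ r in Ioi 0, r ^ m * cutoffKernel t R (m + 1) r = 1 / (m + 1) + log (R / t) := by
  have hcont : Continuous fun r : ℝ => r ^ m * (max r t ^ (m + 1))⁻¹ :=
    (continuous_pow m).mul (continuous_inv_max_pow ht _)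
  have hinner : ∫ r in (0)..t, r ^ m * (max r t ^ (m + 1))⁻¹ = 1 / (m + 1) := by
    rw [intervalIntegral.integral_congr (g := fun r => r ^ m * (t ^ (m + 1))⁻¹),
      intervalIntegral.integral_mul_const, integral_pow]
    · field_simp
      ring
    · intro r hr
      rw [uIcc_of_le ht.le] at hr
      simp [max_eq_right hr.2]
  have houter : ∫ r in t..R, r ^ m * (max r t ^ (m + 1))⁻¹ = log (R / t) := by
    rw [intervalIntegral.integral_congr (g := fun r => r⁻¹), integral_inv]
    · rw [uIcc_of_le htR]
      exact fun h => ht.not_ge h.1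
    · intro r hr
      rw [uIcc_of_le htR] at hr
      have hr0 : 0 < r := ht.trans_le hr.1
      simp only [max_eq_left hr.1, pow_succ]
      field_simp
  calc ∫ r in Ioi 0, r ^ m * cutoffKernel t R (m + 1) r
      = ∫ r in Ioc 0 R, r ^ m * (max r t ^ (m + 1))⁻¹ := by
        rw [← Ioi_inter_Iic, ← setIntegral_indicator measurableSet_Iic]
        simp only [cutoffKernel, indicator_mul_right]
    _ = 1 / (m + 1) + log (R / t) := by
      rw [← intervalIntegral.integral_of_le (ht.le.trans htR),
        ← intervalIntegral.integral_add_adjacent_intervals (hcont.intervalIntegrable 0 t)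
          (hcont.intervalIntegrable t R), hinner, houter]

lemma integrable_cutoffKernel_norm_sub {E : Type*} [NormedAddCommGroup E] [ProperSpace E]
    [MeasurableSpace E] [OpensMeasurableSpace E] (μ : Measure E) [IsFiniteMeasureOnCompacts μ]
    {t : ℝ} (ht : 0 < t) (R : ℝ) (n : ℕ) (x₀ : E) :
    Integrable (fun y => cutoffKernel t R n ‖x₀ - y‖) μ := by
  have hsupp : (fun y => cutoffKernel t R n ‖x₀ - y‖)
      = (closedBall x₀ R).indicator fun y => (max ‖x₀ - y‖ t ^ n)⁻¹ := by
    ext y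
    simp [cutoffKernel, indicator, dist_eq_norm, norm_sub_rev]
  rw [hsupp, integrable_indicator_iff measurableSet_closedBall]
  exact ((continuous_inv_max_pow ht n).comp (continuous_const.sub continuous_id).norm).continuousOn
    |>.integrableOn_compact (isCompact_closedBall x₀ R)

section AddHaar

variable {E : Type*} [NormedAddCommGroup E] [NormedSpace ℝ E] [FiniteDimensional ℝ E]
  [MeasurableSpace E] [BorelSpace E] (μ : Measure E) [μ.IsAddHaarMeasure]

lemma integral_cutoffKernel_norm {m : ℕ} (hE : Module.finrank ℝ E = m + 1) {t R : ℝ}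
    (ht : 0 < t) (htR : t ≤ R) :
    ∫ x, cutoffKernel t R (m + 1) ‖x‖ ∂μ = μ.real (ball 0 1) * (1 + (m + 1) * log (R / t)) := by
  have : Nontrivial E := Module.nontrivial_of_finrank_pos (R := ℝ) (by omega)
  rw [integral_fun_norm_addHaar, hE, Nat.add_sub_cancel]
  simp only [nsmul_eq_mul, smul_eq_mul]
  rw [integral_Ioi_pow_mul_cutoffKernel ht htR]
  push_cast
  field_simp

lemma norm_setIntegral_le_of_norm_le_inv_max_pow {F : Type*} [NormedAddCommGroup F]
    [NormedSpace ℝ F] {m : ℕ} (hE : Module.finrank ℝ E = m + 1) {t R : ℝ} (ht : 0 < t)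
    (htR : t ≤ R) {s : Set E} (hs : μ s < ⊤) (x₀ : E) {g : E → F}
    (hg : ∀ᵐ y ∂μ.restrict s, ‖g y‖ ≤ (max ‖x₀ - y‖ t ^ (m + 1))⁻¹) :
    ‖∫ y in s, g y ∂μ‖ ≤ (μ.real (ball 0 1) + (R ^ (m + 1))⁻¹ * μ.real s)
      + (m + 1) * μ.real (ball 0 1) * log (R / t) := by
  set K := fun y => cutoffKernel t R (m + 1) ‖x₀ - y‖
  have hK : Integrable K μ := integrable_cutoffKernel_norm_sub μ ht R (m + 1) x₀
  have hK0 : ∀ y, 0 ≤ K y := fun y => indicator_nonneg (fun r _ => by positivity) _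
  calc ‖∫ y in s, g y ∂μ‖ ≤ ∫ y in s, (K y + (R ^ (m + 1))⁻¹) ∂μ := by
        refine norm_integral_le_of_norm_le (hK.integrableOn.add (integrableOn_const hs.ne)) ?_
        filter_upwards [hg] with y hy
        exact hy.trans (inv_max_pow_le_cutoffKernel_add (ht.trans_le htR) t _ _)
    _ = ∫ y in s, K y ∂μ + (R ^ (m + 1))⁻¹ * μ.real s := by
        rw [integral_add hK.integrableOn (integrableOn_const hs.ne), setIntegral_const,
          smul_eq_mul, mul_comm]
    _ ≤ ∫ y, K y ∂μ + (R ^ (m + 1))⁻¹ * μ.real s := by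
        grw [setIntegral_le_integral hK (.of_forall hK0)]
    _ = ∫ y, cutoffKernel t R (m + 1) ‖y‖ ∂μ + (R ^ (m + 1))⁻¹ * μ.real s := by
        rw [integral_sub_left_eq_self (fun y => cutoffKernel t R (m + 1) ‖y‖) μ x₀]
    _ = _ := by
        rw [integral_cutoffKernel_norm μ hE ht htR]
        ring

end AddHaar

lemma norm_inv_sqrt_pow_smul_le {E : Type*} [NormedAddCommGroup E] [NormedSpace ℝ E] (w : E)
    {t : ℝ} (ht : 0 < t) (n : ℕ) :
    ‖(√(‖w‖ ^ 2 + t ^ 2) ^ (n + 1))⁻¹ • (w, t)‖ ≤ (max ‖w‖ t ^ n)⁻¹ := by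
  set M := max ‖w‖ t
  set s := √(‖w‖ ^ 2 + t ^ 2)
  have hM : 0 < M := lt_max_of_lt_right ht
  have hMs : M ≤ s := max_le (le_sqrt_of_sq_le (by nlinarith)) (le_sqrt_of_sq_le (by nlinarith))
  have hs : 0 < s := hM.trans_le hMs
  have hnorm : ‖((w, t) : E × ℝ)‖ = M := by rw [Prod.norm_def, norm_of_nonneg ht.le]
  calc ‖(s ^ (n + 1))⁻¹ • (w, t)‖ = M * (s ^ (n + 1))⁻¹ := by
        rw [norm_smul, hnorm, norm_of_nonneg (by positivity), mul_comm]
    _ ≤ s * (s ^ (n + 1))⁻¹ := by gcongr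
    _ = (s ^ n)⁻¹ := by rw [pow_succ]; field_simp
    _ ≤ (M ^ n)⁻¹ := by gcongr

lemma sqrt_norm_fst_sq_add_snd_sq_le {E : Type*} [NormedAddCommGroup E] (x : E × ℝ) :
    √(‖x.1‖ ^ 2 + x.2 ^ 2) ≤ 2 * ‖x‖ := by
  have h1 := norm_fst_le x
  have h2 : |x.2| ≤ ‖x‖ := norm_snd_le x
  rw [sqrt_le_left (by positivity), ← sq_abs x.2]
  nlinarith [norm_nonneg x.1, abs_nonneg x.2]

lemma add_mul_log_two_div_le {a b t : ℝ} (ha : 0 ≤ a) (hb : 0 ≤ b) (ht : 0 < t)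
    (ht2 : t ≤ 1 / 2) : a + b * log (2 / t) ≤ (a / log 2 + 2 * b) * log (1 / t) := by
  have hlog2 : 0 < log 2 := log_pos one_lt_two
  have hL : log 2 ≤ log (1 / t) := log_le_log two_pos (by rw [le_div_iff₀ ht]; linarith)
  have hsplit : log (2 / t) = log 2 + log (1 / t) := by
    rw [← log_mul two_ne_zero (by positivity)]; ring_nf
  have ha' : a ≤ a / log 2 * log (1 / t) := by
    rw [div_mul_eq_mul_div, le_div_iff₀ hlog2]; gcongr
  rw [hsplit]
  nlinarith

/-- **Logarithmic bound on the gradient of a single-layer potential with bounded density.**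
If `|u| ≤ 1` a.e. and `u` vanishes outside the closed ball of radius 2 in the hyperplane,
then for `0 < x_d ≤ 1/2` the Euclidean norm of
`∫_{|y′|≤2} ((x′−y′, x_d)/|(x′−y′, x_d)|^d) u(y′) dy′` is at most `C·log(1/x_d)`. -/
theorem single_layer_log_bound (d : ℕ) (hd : 2 ≤ d) :
    ∃ C : ℝ, 0 < C ∧
      ∀ u : Hyp d → ℝ, Measurable u →
        (∀ᵐ y' : Hyp d, |u y'| ≤ 1) →
        (∀ y' : Hyp d, y' ∉ Metric.closedBall (0 : Hyp d) 2 → u y' = 0) →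
      ∀ x' : Hyp d, ∀ xd : ℝ, xd ∈ Set.Ioc (0 : ℝ) (1/2) →
        Real.sqrt (nsq (∫ y' in Metric.closedBall (0 : Hyp d) 2,
            u y' • (Real.sqrt (nsq ((x' - y', xd) : Amb d)) ^ d)⁻¹ • ((x' - y', xd) : Amb d)))
          ≤ C * Real.log (1 / xd) := by
  obtain ⟨m, rfl⟩ : ∃ m, d = m + 2 := ⟨d - 2, by omega⟩
  have hdim : Module.finrank ℝ (Hyp (m + 2)) = m + 1 := by simp
  set B := volume.real (ball (0 : Hyp (m + 2)) 1)
  set a := B + (2 ^ (m + 1))⁻¹ * volume.real (closedBall (0 : Hyp (m + 2)) 2)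
  set b := (m + 1) * B
  have hB : 0 < B := ENNReal.toReal_pos (measure_ball_pos _ _ one_pos).ne' measure_ball_lt_top.ne
  have ha : 0 < a := by positivity
  have hb : 0 ≤ b := by positivity
  refine ⟨2 * (a / log 2 + 2 * b), by have := log_pos one_lt_two; positivity, ?_⟩
  rintro u - hu - x' t ⟨ht, ht2⟩
  set W := ∫ y in closedBall (0 : Hyp (m + 2)) 2,
    u y • (√(nsq ((x' - y, t) : Amb (m + 2))) ^ (m + 2))⁻¹ • ((x' - y, t) : Amb (m + 2))
  have hW : ‖W‖ ≤ a + b * log (2 / t) := by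
    refine norm_setIntegral_le_of_norm_le_inv_max_pow volume hdim ht (by linarith)
      measure_closedBall_lt_top x' ?_
    filter_upwards [ae_restrict_of_ae hu] with y hy
    rw [norm_smul, Real.norm_eq_abs]
    exact (mul_le_of_le_one_left (norm_nonneg _) hy).trans
      (norm_inv_sqrt_pow_smul_le (x' - y) ht (m + 1))
  calc √(nsq W) ≤ 2 * ‖W‖ := sqrt_norm_fst_sq_add_snd_sq_le W
    _ ≤ 2 * (a + b * log (2 / t)) := by gcongr
    _ ≤ 2 * ((a / log 2 + 2 * b) * log (1 / t)) := by
        grw [add_mul_log_two_div_le ha.le hb ht ht2]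
    _ = 2 * (a / log 2 + 2 * b) * log (1 / t) := (mul_assoc _ _ _).symm
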